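/- For a probability distribution on a two-point space with probabilities (p, 1−p) where 0 < p < 1, the Fenchel–Legendre transform of the log-moment generating function, evaluated at the distribution (x₁, x₂) with x₁ + x₂ = 1 and 0 < x₁ < 1, equals the Kullback–Leibler divergence x₁ log(x₁/p) + x₂ log(x₂/(1−p)). That is, sup over (λ₁, λ₂) ∈ ℝ² of [λ₁x₁ + λ₂x₂ − log(p e^{λ₁} + (1−p) e^{λ₂})] = x₁ log(x₁/p) + x₂ log(x₂/(1−p)). -/
import Mathlib


/-- The Fenchel–Legendre transform of the log-mgf of a two-point distribution
equals the Kullback–Leibler divergence. -/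
theorem stmt_1 (p x₁ : ℝ) (hp : p ∈ Set.Ioo (0 : ℝ) 1) (hx : x₁ ∈ Set.Ioo (0 : ℝ) 1) :
    IsLUB
      (Set.range fun l : ℝ × ℝ =>
        l.1 * x₁ + l.2 * (1 - x₁) - Real.log (p * Real.exp l.1 + (1 - p) * Real.exp l.2))
      (x₁ * Real.log (x₁ / p) + (1 - x₁) * Real.log ((1 - x₁) / (1 - p))) := by
  obtain ⟨hp0, hp1⟩ := hp
  obtain ⟨hx0, hx1⟩ := hx
  have hq0 : (0:ℝ) < 1 - p := by linarith
  have hx2 : (0:ℝ) < 1 - x₁ := by linarith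
  have hxp : (0:ℝ) < x₁ / p := div_pos hx0 hp0
  have hxq : (0:ℝ) < (1 - x₁) / (1 - p) := div_pos hx2 hq0
  constructor
  · rintro y ⟨⟨l₁, l₂⟩, rfl⟩
    simp only
    set u := l₁ - Real.log (x₁ / p) with hu
    set v := l₂ - Real.log ((1 - x₁) / (1 - p)) with hv
    have h1 : p * Real.exp l₁ = x₁ * Real.exp u := by
      rw [hu, Real.exp_sub, Real.exp_log hxp]
      field_simp
    have h2 : (1 - p) * Real.exp l₂ = (1 - x₁) * Real.exp v := by
      rw [hv, Real.exp_sub, Real.exp_log hxq]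
      field_simp
    have hconv : Real.exp (x₁ * u + (1 - x₁) * v) ≤ x₁ * Real.exp u + (1 - x₁) * Real.exp v := by
      have := convexOn_exp.2 (Set.mem_univ u) (Set.mem_univ v) hx0.le hx2.le (by ring)
      simpa using this
    have hpos : (0:ℝ) < x₁ * Real.exp u + (1 - x₁) * Real.exp v :=
      lt_of_lt_of_le (Real.exp_pos _) hconv
    have hlog : x₁ * u + (1 - x₁) * v ≤ Real.log (p * Real.exp l₁ + (1 - p) * Real.exp l₂) := by
      rw [h1, h2, Real.le_log_iff_exp_le hpos]
      exact hconv
    rw [hu, hv] at hlog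
    nlinarith [hlog]
  · intro b hb
    have hmem := hb ⟨(Real.log (x₁ / p), Real.log ((1 - x₁) / (1 - p))), rfl⟩
    simp only at hmem
    have e1 : p * Real.exp (Real.log (x₁ / p)) = x₁ := by
      rw [Real.exp_log hxp]; field_simp
    have e2 : (1 - p) * Real.exp (Real.log ((1 - x₁) / (1 - p))) = 1 - x₁ := by
      rw [Real.exp_log hxq]; field_simp
    rw [e1, e2] at hmem
    have : x₁ + (1 - x₁) = (1:ℝ) := by ring
    rw [this, Real.log_one] at hmem
    linarith [hmem]
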